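/- For any traceless self-adjoint operator X on an n-qudit system and any subset A of sites, ‖X‖_{W₁} ≤ |A|·‖X‖₁ + ‖Tr_A X‖_{W₁}. -/

import Mathlib

open scoped ComplexOrder

/-- The trace norm `‖A‖₁ = Tr √(A†A)` (sum of singular values). -/
noncomputable def traceNorm {m : Type*} [Fintype m] [DecidableEq m] (A : Matrix m m ℂ) : ℝ :=
  ∑ i, Real.sqrt ((Matrix.posSemidef_conjTranspose_mul_self A).1.eigenvalues i)

/-- A quantum state (density matrix): positive semidefinite with unit trace. -/
def IsState {m : Type*} [Fintype m] (ρ : Matrix m m ℂ) : Prop :=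
  ρ.PosSemidef ∧ Matrix.trace ρ = 1

/-- Extend a configuration on `V \ {v}` by the value `k` at site `v`. -/
def insertAt {V : Type*} [DecidableEq V] {d : ℕ} (v : V) (k : Fin d)
    (s : {w : V // w ≠ v} → Fin d) : V → Fin d :=
  fun w => if h : w = v then k else s ⟨w, h⟩

/-- Partial trace over the site `v` of an operator on `n` qudits. -/
noncomputable def ptraceSite {V : Type*} [Fintype V] [DecidableEq V] {d : ℕ} (v : V)
    (X : Matrix (V → Fin d) (V → Fin d) ℂ) :
    Matrix ({w : V // w ≠ v} → Fin d) ({w : V // w ≠ v} → Fin d) ℂ :=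
  Matrix.of fun s t => ∑ k : Fin d, X (insertAt v k s) (insertAt v k t)

/-- Extend a configuration on `V \ A` by a configuration `f` on `A`. -/
def insertSet {V : Type*} [DecidableEq V] {d : ℕ} (A : Finset V)
    (f : {w : V // w ∈ A} → Fin d) (s : {w : V // w ∉ A} → Fin d) : V → Fin d :=
  fun w => if h : w ∈ A then f ⟨w, h⟩ else s ⟨w, h⟩

/-- Partial trace over the sites in `A` of an operator on `n` qudits. -/
noncomputable def ptraceSet {V : Type*} [Fintype V] [DecidableEq V] {d : ℕ} (A : Finset V)
    (X : Matrix (V → Fin d) (V → Fin d) ℂ) :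
    Matrix ({w : V // w ∉ A} → Fin d) ({w : V // w ∉ A} → Fin d) ℂ :=
  Matrix.of fun s t =>
    ∑ f : {w : V // w ∈ A} → Fin d, X (insertSet A f s) (insertSet A f t)

/-- The quantum Wasserstein norm of order 1 of De Palma et al.:
`‖X‖_{W₁} = min { (1/2) ∑_v ‖Y_v‖₁ : X = ∑_v Y_v, Tr_v Y_v = 0 }`. -/
noncomputable def W1norm {V : Type*} [Fintype V] [DecidableEq V] {d : ℕ}
    (X : Matrix (V → Fin d) (V → Fin d) ℂ) : ℝ :=
  sInf { r : ℝ | ∃ Y : V → Matrix (V → Fin d) (V → Fin d) ℂ,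
    X = ∑ v, Y v ∧ (∀ v, ptraceSite v (Y v) = 0) ∧
      r = (1 / 2) * ∑ v, traceNorm (Y v) }

/-!
The trace norm is dual to the operator norm: `|Tr (A B)| ≤ ‖A‖₁ ‖B‖`, with equality for a
contraction built from an eigenbasis of `Aᴴ A`. Consequently the partial trace `Tr_A` and its
adjoints `B ↦ B ⊗ 𝟙_A` and `B ↦ B ⊗ 𝟙_A / d^|A|` are trace-norm contractions, and so is the
depolarization `D_J X = Tr_J X ⊗ 𝟙_J / d^|J|`.

Adding the sites of `A` one at a time, `X - D_A X` telescopes into the differences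
`D_J X - D_{J ∪ {v}} X`, each killed by `Tr_v` and of trace norm at most `2 ‖X‖₁`. Any admissible
decomposition of `Tr_A X`, tensored with `𝟙_A / d^|A|`, is an admissible decomposition of `D_A X`
of no larger cost. Together they decompose `X` at cost `|A| ‖X‖₁` plus the cost for `Tr_A X`.
For `A` the set of all sites and `X` traceless, `D_A X = 0`, so the same telescoping shows that
admissible decompositions exist and the infimum defining `W1norm` is not the junk `sInf ∅ = 0`.
-/

open Matrix
open scoped Matrix.Norms.L2Operator

section OperatorNorm

variable {m n : Type*} [Fintype m] [Fintype n]

lemma l2_opNorm_le_of_sum_sq_le [DecidableEq m] {M : Matrix n m ℂ} {r : ℝ} (hr : 0 ≤ r)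
    (h : ∀ x : m → ℂ, ∑ i, ‖(M *ᵥ x) i‖ ^ 2 ≤ r ^ 2 * ∑ j, ‖x j‖ ^ 2) : ‖M‖ ≤ r := by
  rw [l2_opNorm_def]
  refine ContinuousLinearMap.opNorm_le_bound _ hr fun x => ?_
  rw [← pow_le_pow_iff_left₀ (norm_nonneg _) (by positivity) two_ne_zero, mul_pow,
    EuclideanSpace.norm_sq_eq, EuclideanSpace.norm_sq_eq]
  exact h x

lemma sum_sq_norm_mulVec_le [DecidableEq m] (M : Matrix n m ℂ) (x : m → ℂ) :
    ∑ i, ‖(M *ᵥ x) i‖ ^ 2 ≤ ‖M‖ ^ 2 * ∑ j, ‖x j‖ ^ 2 := by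
  have h := pow_le_pow_left₀ (norm_nonneg _) (l2_opNorm_mulVec M (WithLp.toLp 2 x)) 2
  rwa [mul_pow, EuclideanSpace.norm_sq_eq, EuclideanSpace.norm_sq_eq] at h

lemma l2_opNorm_submatrix_le [DecidableEq m] [DecidableEq n] (M : Matrix n n ℂ) {e : m → n}
    (he : Function.Injective e) : ‖M.submatrix e e‖ ≤ ‖M‖ := by
  set P : Matrix n m ℂ := (1 : Matrix n n ℂ).submatrix id e
  have hP_star : Pᴴ = (1 : Matrix n n ℂ).submatrix e id := by
    rw [conjTranspose_submatrix, conjTranspose_one]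
  have hM : M.submatrix e e = Pᴴ * M * P := by
    have h1 := one_submatrix_mul e (Equiv.refl n) M
    have h2 := mul_submatrix_one (Equiv.refl n) e (M.submatrix e id)
    simp only [Equiv.refl_symm, Equiv.coe_refl, Function.id_comp] at h1 h2
    rw [hP_star, h1, h2, submatrix_submatrix]
    rfl
  have hP : ‖P‖ * ‖P‖ ≤ 1 := by
    have h1 := one_submatrix_mul e (Equiv.refl n) P
    simp only [Equiv.refl_symm, Equiv.coe_refl, Function.id_comp] at h1
    rw [← l2_opNorm_conjTranspose_mul_self, hP_star, h1, submatrix_submatrix, Function.comp_id,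
      Function.id_comp, submatrix_one _ he, ← diagonal_one, l2_opNorm_diagonal,
      pi_norm_le_iff_of_nonneg zero_le_one]
    simp
  calc ‖M.submatrix e e‖ ≤ ‖Pᴴ‖ * ‖M‖ * ‖P‖ := by
        rw [hM]
        exact (l2_opNorm_mul _ _).trans
          (mul_le_mul_of_nonneg_right (l2_opNorm_mul _ _) (norm_nonneg _))
    _ ≤ ‖M‖ := by
        rw [l2_opNorm_conjTranspose]
        nlinarith [norm_nonneg M, norm_nonneg P]

lemma norm_unitary_mul_mul_star [DecidableEq m] (U : unitary (Matrix m m ℂ)) (M : Matrix m m ℂ) :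
    ‖(U : Matrix m m ℂ) * M * star (U : Matrix m m ℂ)‖ = ‖M‖ := by
  rw [← Unitary.coe_star, CStarRing.norm_mul_coe_unitary, CStarRing.norm_coe_unitary_mul]

end OperatorNorm

section TraceNorm

variable {m : Type*} [Fintype m] [DecidableEq m]

lemma traceNorm_nonneg (A : Matrix m m ℂ) : 0 ≤ traceNorm A :=
  Finset.sum_nonneg fun _ _ => Real.sqrt_nonneg _

lemma trace_eq_sum_inner (M : Matrix m m ℂ) (b : OrthonormalBasis m ℂ (EuclideanSpace ℂ m)) :
    M.trace = ∑ i, inner ℂ (b i) (toEuclideanCLM (𝕜 := ℂ) M (b i)) := by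
  have h := LinearMap.trace_eq_sum_inner (toEuclideanLin M) b
  rwa [toEuclideanLin_eq_toLin_orthonormal, trace_toLin_eq] at h

lemma norm_toEuclideanCLM_eigenvectorBasis (A : Matrix m m ℂ) (i : m) :
    ‖toEuclideanCLM (𝕜 := ℂ) A ((posSemidef_conjTranspose_mul_self A).1.eigenvectorBasis i)‖ =
      √((posSemidef_conjTranspose_mul_self A).1.eigenvalues i) := by
  set hA := (posSemidef_conjTranspose_mul_self A).1
  set x := hA.eigenvectorBasis i
  have hx : toEuclideanCLM (𝕜 := ℂ) (Aᴴ * A) x = (hA.eigenvalues i : ℂ) • x := by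
    ext1
    simp [x, hA.mulVec_eigenvectorBasis i]
  have hsq : ‖toEuclideanCLM (𝕜 := ℂ) A x‖ ^ 2 = hA.eigenvalues i := by
    rw [← inner_self_eq_norm_sq (𝕜 := ℂ), ← ContinuousLinearMap.adjoint_inner_right,
      ← ContinuousLinearMap.comp_apply, ← ContinuousLinearMap.star_eq_adjoint, ← map_star,
      ← ContinuousLinearMap.mul_def, ← map_mul, star_eq_conjTranspose, hx, inner_smul_right,
      inner_self_eq_norm_sq_to_K, OrthonormalBasis.norm_eq_one]
    simp
  rw [← hsq, Real.sqrt_sq (norm_nonneg _)]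

lemma norm_trace_mul_le (A B : Matrix m m ℂ) : ‖trace (A * B)‖ ≤ traceNorm A * ‖B‖ := by
  set b := (posSemidef_conjTranspose_mul_self A).1.eigenvectorBasis
  rw [trace_mul_comm, trace_eq_sum_inner _ b, traceNorm, Finset.sum_mul]
  refine (norm_sum_le _ _).trans (Finset.sum_le_sum fun i _ => ?_)
  calc ‖inner ℂ (b i) (toEuclideanCLM (𝕜 := ℂ) (B * A) (b i))‖
      ≤ ‖b i‖ * ‖toEuclideanCLM (𝕜 := ℂ) B (toEuclideanCLM (𝕜 := ℂ) A (b i))‖ := by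
        rw [map_mul]
        exact norm_inner_le_norm _ _
    _ ≤ 1 * (‖B‖ * ‖toEuclideanCLM (𝕜 := ℂ) A (b i)‖) := by
        rw [b.norm_eq_one]
        exact mul_le_mul_of_nonneg_left ((toEuclideanCLM (𝕜 := ℂ) B).le_opNorm _) zero_le_one
    _ = _ := by rw [norm_toEuclideanCLM_eigenvectorBasis, one_mul, mul_comm]

/-- With `Aᴴ A = U diag(λ) Uᴴ`, the witness is `U diag(λᵢ^{-1/2}) Uᴴ Aᴴ`, the adjoint of the
partial isometry in the polar decomposition of `A`; the junk value `(√0)⁻¹ = 0` takes care of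
the kernel. -/
lemma exists_norm_le_one_trace_mul_eq_traceNorm (A : Matrix m m ℂ) :
    ∃ B : Matrix m m ℂ, ‖B‖ ≤ 1 ∧ trace (A * B) = traceNorm A := by
  set hA := (posSemidef_conjTranspose_mul_self A).1
  set U := hA.eigenvectorUnitary
  set ev := hA.eigenvalues
  set f : m → ℂ := fun i => ((√(ev i))⁻¹ : ℝ)
  have hdiag : star (U : Matrix m m ℂ) * (Aᴴ * A) * U = diagonal (fun i => (ev i : ℂ)) := by
    have := hA.conjStarAlgAut_star_eigenvectorUnitary
    rwa [Unitary.conjStarAlgAut_star_apply] at this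
  have hfev : ∀ i, (ev i : ℂ) * f i = (√(ev i) : ℝ) := fun i => by
    rw [← Complex.ofReal_mul, ← div_eq_mul_inv, Real.div_sqrt]
  set B := (U : Matrix m m ℂ) * diagonal f * star (U : Matrix m m ℂ) * Aᴴ
  refine ⟨B, ?_, ?_⟩
  · have hB_mul_star : B * star B =
        U * diagonal (fun i => f i * ev i * f i) * star (U : Matrix m m ℂ) := by
      have hf : star (diagonal f) = diagonal f := by
        rw [star_eq_conjTranspose, diagonal_conjTranspose]
        congr 1
        ext i
        simp [f]
      simp only [B, star_mul, star_star, hf, star_eq_conjTranspose Aᴴ,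
        conjTranspose_conjTranspose]
      rw [← diagonal_mul_diagonal, ← diagonal_mul_diagonal, ← hdiag]
      noncomm_ring
    have hB : ‖B‖ * ‖B‖ ≤ 1 := by
      rw [← CStarRing.norm_self_mul_star, hB_mul_star, norm_unitary_mul_mul_star,
        l2_opNorm_diagonal, pi_norm_le_iff_of_nonneg zero_le_one]
      intro i
      rw [mul_comm (f i), hfev, ← Complex.ofReal_mul, Complex.norm_real,
        Real.norm_of_nonneg (by positivity)]
      exact mul_inv_le_one
    nlinarith [norm_nonneg B]
  · calc trace (A * B)
        = trace ((star (U : Matrix m m ℂ) * (Aᴴ * A) * (U : Matrix m m ℂ)) * diagonal f) := by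
          rw [trace_mul_comm, trace_mul_comm (star _ * _ * _)]
          simp only [B, Matrix.mul_assoc]
          rw [trace_mul_comm (U : Matrix m m ℂ)]
          simp only [Matrix.mul_assoc]
      _ = traceNorm A := by
          rw [hdiag, diagonal_mul_diagonal, trace_diagonal]
          simp only [hfev]
          rw [← Complex.ofReal_sum]
          rfl

lemma re_trace_mul_le_traceNorm (A : Matrix m m ℂ) {B : Matrix m m ℂ} (hB : ‖B‖ ≤ 1) :
    (trace (A * B)).re ≤ traceNorm A :=
  (Complex.re_le_norm _).trans <|
    (norm_trace_mul_le A B).trans (mul_le_of_le_one_right (traceNorm_nonneg A) hB)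

lemma traceNorm_le_of_forall_re_trace_mul_le {A : Matrix m m ℂ} {r : ℝ}
    (h : ∀ B : Matrix m m ℂ, ‖B‖ ≤ 1 → (trace (A * B)).re ≤ r) : traceNorm A ≤ r := by
  obtain ⟨B, hB, hAB⟩ := exists_norm_le_one_trace_mul_eq_traceNorm A
  simpa [hAB] using h B hB

@[simp]
lemma traceNorm_zero : traceNorm (0 : Matrix m m ℂ) = 0 :=
  le_antisymm (traceNorm_le_of_forall_re_trace_mul_le fun _ _ => by simp) (traceNorm_nonneg 0)

lemma traceNorm_add_le (A B : Matrix m m ℂ) : traceNorm (A + B) ≤ traceNorm A + traceNorm B :=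
  traceNorm_le_of_forall_re_trace_mul_le fun C hC => by
    rw [Matrix.add_mul, trace_add, Complex.add_re]
    exact add_le_add (re_trace_mul_le_traceNorm A hC) (re_trace_mul_le_traceNorm B hC)

lemma traceNorm_sub_le (A B : Matrix m m ℂ) : traceNorm (A - B) ≤ traceNorm A + traceNorm B :=
  traceNorm_le_of_forall_re_trace_mul_le fun C hC => by
    have hB := re_trace_mul_le_traceNorm B (B := -C) (by rwa [norm_neg])
    rw [Matrix.mul_neg, trace_neg, Complex.neg_re] at hB
    rw [Matrix.sub_mul, trace_sub, Complex.sub_re]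
    linarith [re_trace_mul_le_traceNorm A hC]

end TraceNorm

section Configurations

variable {V : Type*} [DecidableEq V] {d : ℕ}

def splitConfig (A : Finset V) :
    (V → Fin d) ≃ ({w : V // w ∈ A} → Fin d) × ({w : V // w ∉ A} → Fin d) :=
  Equiv.piEquivPiSubtypeProd (· ∈ A) fun _ => Fin d

@[simp]
lemma splitConfig_apply_fst (A : Finset V) (x : V → Fin d) (u : {w : V // w ∈ A}) :
    (splitConfig A x).1 u = x u :=
  rfl

@[simp]
lemma splitConfig_apply_snd (A : Finset V) (x : V → Fin d) (u : {w : V // w ∉ A}) :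
    (splitConfig A x).2 u = x u :=
  rfl

@[simp]
lemma splitConfig_symm_apply (A : Finset V) (f : {w : V // w ∈ A} → Fin d)
    (s : {w : V // w ∉ A} → Fin d) : (splitConfig A).symm (f, s) = insertSet A f s :=
  rfl

@[simp]
lemma splitConfig_insertSet (A : Finset V) (f : {w : V // w ∈ A} → Fin d)
    (s : {w : V // w ∉ A} → Fin d) : splitConfig A (insertSet A f s) = (f, s) :=
  (splitConfig A).apply_symm_apply (f, s)

@[simp]
lemma insertAt_self (w : V) (k : Fin d) (s : {u : V // u ≠ w} → Fin d) : insertAt w k s w = k := by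
  simp [insertAt]

lemma splitConfig_insertAt_fst {A : Finset V} {w : V} (hw : w ∉ A) (k : Fin d)
    (s : {u : V // u ≠ w} → Fin d) :
    (splitConfig A (insertAt w k s)).1 =
      fun u : {u // u ∈ A} => s ⟨u, ne_of_mem_of_not_mem u.2 hw⟩ := by
  funext u
  simp [insertAt, ne_of_mem_of_not_mem u.2 hw]

lemma splitConfig_insertAt_snd {A : Finset V} {w : V} (hw : w ∉ A) (k : Fin d)
    (s : {u : V // u ≠ w} → Fin d) :
    (splitConfig A (insertAt w k s)).2 =
      insertAt ⟨w, hw⟩ k fun u => s ⟨u.1.1, fun h => u.2 (Subtype.ext h)⟩ := by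
  funext u
  by_cases h : u = ⟨w, hw⟩
  · subst h
    simp
  · have h' : u.1 ≠ w := fun h'' => h (Subtype.ext h'')
    simp [insertAt, h, h']

lemma splitConfig_insert_insertAt_snd (J : Finset V) (v : V) (k : Fin d)
    (s : {w // w ≠ v} → Fin d) :
    (splitConfig (insert v J) (insertAt v k s)).2 =
      fun u : {w // w ∉ insert v J} => s ⟨u, fun h => u.2 (Finset.mem_insert.2 (Or.inl h))⟩ := by
  funext ⟨u, hu⟩
  have huv : u ≠ v := fun h => hu (Finset.mem_insert.2 (Or.inl h))
  simp [insertAt, huv]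

def insertConfigEquiv {J : Finset V} {v : V} (hv : v ∉ J) :
    Fin d × ({w // w ∈ J} → Fin d) ≃ ({w // w ∈ insert v J} → Fin d) :=
  ((Equiv.arrowCongr (Finset.subtypeInsertEquivOption hv) (Equiv.refl _)).trans
    (Equiv.piOptionEquivProd (β := fun _ => Fin d))).symm

lemma insertConfigEquiv_apply {J : Finset V} {v : V} (hv : v ∉ J) (k : Fin d)
    (f : {w // w ∈ J} → Fin d) (w : V) (hw : w ∈ insert v J) :
    insertConfigEquiv hv (k, f) ⟨w, hw⟩ =
      if h : w = v then k else f ⟨w, (Finset.mem_insert.1 hw).resolve_left h⟩ := by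
  by_cases h : w = v
  · subst h
    simp [insertConfigEquiv, Finset.subtypeInsertEquivOption, Equiv.piOptionEquivProd]
  · simp [insertConfigEquiv, Finset.subtypeInsertEquivOption, Equiv.piOptionEquivProd, h]

lemma splitConfig_insert_fst {J : Finset V} {v : V} (hv : v ∉ J) (x : V → Fin d) :
    (splitConfig (insert v J) x).1 = insertConfigEquiv hv (x v, (splitConfig J x).1) := by
  funext ⟨w, hw⟩
  rw [insertConfigEquiv_apply]
  split_ifs with h
  · simp [← h]
  · simp

lemma insertSet_splitConfig_snd {J : Finset V} {v : V} (hv : v ∉ J) (x : V → Fin d)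
    (f : {w // w ∈ J} → Fin d) :
    insertSet J f (splitConfig J x).2 =
      insertSet (insert v J) (insertConfigEquiv hv (x v, f)) (splitConfig (insert v J) x).2 := by
  funext w
  by_cases hw : w ∈ J
  · have hwv : w ≠ v := ne_of_mem_of_not_mem hw hv
    simp [insertSet, insertConfigEquiv_apply, hw, hwv]
  · by_cases hwv : w = v
    · subst hwv
      simp [insertSet, insertConfigEquiv_apply, hw]
    · simp [insertSet, hw, hwv]

end Configurations

section TensorIdentity

variable {V : Type*} [DecidableEq V] {d : ℕ} (A : Finset V)

/-- `B ⊗ 𝟙_A`, for `B` acting on the sites outside `A`. -/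
noncomputable def tensorOne (B : Matrix ({w // w ∉ A} → Fin d) ({w // w ∉ A} → Fin d) ℂ) :
    Matrix (V → Fin d) (V → Fin d) ℂ :=
  Matrix.of fun s t =>
    if (splitConfig A s).1 = (splitConfig A t).1 then B (splitConfig A s).2 (splitConfig A t).2
    else 0

noncomputable def tensorMaxMixed (B : Matrix ({w // w ∉ A} → Fin d) ({w // w ∉ A} → Fin d) ℂ) :
    Matrix (V → Fin d) (V → Fin d) ℂ :=
  (Fintype.card ({w // w ∈ A} → Fin d) : ℂ)⁻¹ • tensorOne A B

variable {A}

lemma tensorOne_insertSet (B : Matrix ({w // w ∉ A} → Fin d) ({w // w ∉ A} → Fin d) ℂ)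
    (f g : {w : V // w ∈ A} → Fin d) (s t : {w : V // w ∉ A} → Fin d) :
    tensorOne A B (insertSet A f s) (insertSet A g t) = if f = g then B s t else 0 := by
  simp [tensorOne]

lemma tensorMaxMixed_sum {ι : Type*} (s : Finset ι)
    (B : ι → Matrix ({w // w ∉ A} → Fin d) ({w // w ∉ A} → Fin d) ℂ) :
    tensorMaxMixed A (∑ i ∈ s, B i) = ∑ i ∈ s, tensorMaxMixed A (B i) := by
  ext x y
  simp only [tensorMaxMixed, tensorOne, Matrix.smul_apply, of_apply, Matrix.sum_apply]
  split_ifs <;> simp [Finset.mul_sum]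

end TensorIdentity

section PartialTrace

variable {V : Type*} [Fintype V] [DecidableEq V] {d : ℕ} {A : Finset V}

lemma sum_insertSet {M : Type*} [AddCommMonoid M] (A : Finset V) (g : (V → Fin d) → M) :
    ∑ s, g s = ∑ f, ∑ t, g (insertSet A f t) := by
  rw [← (splitConfig A).symm.sum_comp, Fintype.sum_prod_type]
  rfl

@[simp]
lemma ptraceSite_zero (v : V) : ptraceSite v (0 : Matrix (V → Fin d) (V → Fin d) ℂ) = 0 := by
  ext
  simp [ptraceSite]

lemma ptraceSite_add (v : V) (X Y : Matrix (V → Fin d) (V → Fin d) ℂ) :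
    ptraceSite v (X + Y) = ptraceSite v X + ptraceSite v Y := by
  ext
  simp [ptraceSite, Finset.sum_add_distrib]

lemma ptraceSite_sub (v : V) (X Y : Matrix (V → Fin d) (V → Fin d) ℂ) :
    ptraceSite v (X - Y) = ptraceSite v X - ptraceSite v Y := by
  ext
  simp [ptraceSite]

lemma trace_ptraceSet (X : Matrix (V → Fin d) (V → Fin d) ℂ) :
    trace (ptraceSet A X) = trace X := by
  simp only [trace, diag, ptraceSet, of_apply]
  rw [sum_insertSet A, Finset.sum_comm]

lemma ptraceSet_eq_sum_submatrix (C : Matrix (V → Fin d) (V → Fin d) ℂ) :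
    ptraceSet A C = ∑ f, C.submatrix (insertSet A f) (insertSet A f) := by
  ext s t
  simp [ptraceSet, Matrix.sum_apply]

lemma l2_opNorm_ptraceSet_le (C : Matrix (V → Fin d) (V → Fin d) ℂ) :
    ‖ptraceSet A C‖ ≤ Fintype.card ({w // w ∈ A} → Fin d) * ‖C‖ := by
  rw [ptraceSet_eq_sum_submatrix]
  refine (norm_sum_le _ _).trans ((Finset.sum_le_sum fun f _ =>
    l2_opNorm_submatrix_le C fun s t h => ?_).trans (by simp))
  simpa using congrArg (fun u => (splitConfig A u).2) h

lemma tensorOne_mulVec_insertSet (B : Matrix ({w // w ∉ A} → Fin d) ({w // w ∉ A} → Fin d) ℂ)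
    (x : (V → Fin d) → ℂ) (f : {w : V // w ∈ A} → Fin d) (s : {w : V // w ∉ A} → Fin d) :
    (tensorOne A B *ᵥ x) (insertSet A f s) = (B *ᵥ fun t => x (insertSet A f t)) s := by
  simp only [mulVec, dotProduct]
  rw [sum_insertSet A]
  simp [tensorOne_insertSet]

lemma l2_opNorm_tensorOne_le (B : Matrix ({w // w ∉ A} → Fin d) ({w // w ∉ A} → Fin d) ℂ) :
    ‖tensorOne A B‖ ≤ ‖B‖ :=
  l2_opNorm_le_of_sum_sq_le (norm_nonneg B) fun x => by
    rw [sum_insertSet A, sum_insertSet A (fun s => ‖x s‖ ^ 2), Finset.mul_sum]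
    refine Finset.sum_le_sum fun f _ => ?_
    simp only [tensorOne_mulVec_insertSet]
    exact sum_sq_norm_mulVec_le B _

lemma trace_mul_tensorOne (X : Matrix (V → Fin d) (V → Fin d) ℂ)
    (B : Matrix ({w // w ∉ A} → Fin d) ({w // w ∉ A} → Fin d) ℂ) :
    trace (X * tensorOne A B) = trace (ptraceSet A X * B) := by
  simp only [trace, diag, mul_apply]
  rw [sum_insertSet A]
  simp_rw [sum_insertSet A (fun t => X _ t * tensorOne A B t _), tensorOne_insertSet]
  simp only [mul_ite, mul_zero, Finset.sum_ite_irrel, Finset.sum_const_zero, Finset.sum_ite_eq',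
    Finset.mem_univ, if_true, ptraceSet, of_apply, Finset.sum_mul]
  rw [Finset.sum_comm]
  exact Finset.sum_congr rfl fun _ _ => Finset.sum_comm

lemma traceNorm_ptraceSet_le (X : Matrix (V → Fin d) (V → Fin d) ℂ) :
    traceNorm (ptraceSet A X) ≤ traceNorm X :=
  traceNorm_le_of_forall_re_trace_mul_le fun B hB => by
    rw [← trace_mul_tensorOne]
    exact re_trace_mul_le_traceNorm X ((l2_opNorm_tensorOne_le B).trans hB)

lemma traceNorm_tensorMaxMixed_le (B : Matrix ({w // w ∉ A} → Fin d) ({w // w ∉ A} → Fin d) ℂ) :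
    traceNorm (tensorMaxMixed A B) ≤ traceNorm B :=
  traceNorm_le_of_forall_re_trace_mul_le fun C hC => by
    set c := Fintype.card ({w // w ∈ A} → Fin d)
    have htr : trace (tensorMaxMixed A B * C) = trace (B * ((c : ℂ)⁻¹ • ptraceSet A C)) := by
      rw [tensorMaxMixed, smul_mul_assoc, trace_smul, trace_mul_comm, trace_mul_tensorOne,
        trace_mul_comm, mul_smul_comm, trace_smul]
    have hnorm : ‖(c : ℂ)⁻¹ • ptraceSet A C‖ ≤ 1 := by
      rw [norm_smul, norm_inv, Complex.norm_natCast]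
      calc (c : ℝ)⁻¹ * ‖ptraceSet A C‖ ≤ (c : ℝ)⁻¹ * (c * 1) :=
            mul_le_mul_of_nonneg_left ((l2_opNorm_ptraceSet_le C).trans (by gcongr))
              (by positivity)
        _ ≤ 1 := by
            rw [mul_one]
            exact inv_mul_le_one
    rw [htr]
    exact re_trace_mul_le_traceNorm B hnorm

lemma ptraceSite_tensorMaxMixed_eq_zero {w : V} (hw : w ∉ A)
    {B : Matrix ({u // u ∉ A} → Fin d) ({u // u ∉ A} → Fin d) ℂ}
    (hB : ptraceSite ⟨w, hw⟩ B = 0) : ptraceSite w (tensorMaxMixed A B) = 0 := by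
  ext s t
  have hBst := congr_fun₂ hB (fun u => s ⟨u.1.1, fun h => u.2 (Subtype.ext h)⟩)
    (fun u => t ⟨u.1.1, fun h => u.2 (Subtype.ext h)⟩)
  simp only [ptraceSite, of_apply, Matrix.zero_apply] at hBst
  simp only [ptraceSite, tensorMaxMixed, tensorOne, Matrix.smul_apply, of_apply,
    Matrix.zero_apply, splitConfig_insertAt_fst hw, splitConfig_insertAt_snd hw]
  split_ifs
  · rw [← Finset.smul_sum, hBst, smul_zero]
  · simp

end PartialTrace

section Depolarize

variable {V : Type*} [Fintype V] [DecidableEq V] {d : ℕ}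

noncomputable def depolarize (J : Finset V) (X : Matrix (V → Fin d) (V → Fin d) ℂ) :
    Matrix (V → Fin d) (V → Fin d) ℂ :=
  tensorMaxMixed J (ptraceSet J X)

lemma depolarize_apply (J : Finset V) (X : Matrix (V → Fin d) (V → Fin d) ℂ) (x y : V → Fin d) :
    depolarize J X x y = (Fintype.card ({w // w ∈ J} → Fin d) : ℂ)⁻¹ *
      if (splitConfig J x).1 = (splitConfig J y).1 then
        ∑ f, X (insertSet J f (splitConfig J x).2) (insertSet J f (splitConfig J y).2)
      else 0 :=
  rfl

lemma traceNorm_depolarize_le (J : Finset V) (X : Matrix (V → Fin d) (V → Fin d) ℂ) :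
    traceNorm (depolarize J X) ≤ traceNorm X :=
  (traceNorm_tensorMaxMixed_le _).trans (traceNorm_ptraceSet_le X)

@[simp]
lemma depolarize_empty (X : Matrix (V → Fin d) (V → Fin d) ℂ) : depolarize ∅ X = X := by
  have h : ∀ (f : {w // w ∈ (∅ : Finset V)} → Fin d) x, insertSet ∅ f (splitConfig ∅ x).2 = x :=
    fun f x => by
      rw [Subsingleton.elim f (splitConfig ∅ x).1, ← splitConfig_symm_apply,
        Equiv.symm_apply_apply]
  ext x y
  simp [depolarize_apply, h, Subsingleton.elim (splitConfig ∅ x).1 (splitConfig ∅ y).1]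

lemma depolarize_univ_eq_zero {X : Matrix (V → Fin d) (V → Fin d) ℂ} (htr : trace X = 0) :
    depolarize Finset.univ X = 0 := by
  have : IsEmpty {w : V // w ∉ Finset.univ} := ⟨fun w => w.2 (Finset.mem_univ _)⟩
  have hX : ptraceSet Finset.univ X = 0 := by
    ext s t
    obtain rfl := Subsingleton.elim s t
    rw [← trace_ptraceSet (A := Finset.univ), trace, Fintype.sum_subsingleton _ s] at htr
    exact htr
  ext x y
  simp [depolarize, tensorMaxMixed, tensorOne, hX]

lemma ptraceSite_depolarize_insert {J : Finset V} {v : V} (hv : v ∉ J)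
    (X : Matrix (V → Fin d) (V → Fin d) ℂ) :
    ptraceSite v (depolarize (insert v J) X) = ptraceSite v (depolarize J X) := by
  rcases Nat.eq_zero_or_pos d with rfl | hd
  · ext
    simp [ptraceSite]
  ext s t
  simp only [ptraceSite, of_apply, depolarize_apply, splitConfig_insert_fst hv,
    insertSet_splitConfig_snd hv (insertAt v _ s), insertSet_splitConfig_snd hv (insertAt v _ t),
    insertAt_self, splitConfig_insertAt_fst hv, (insertConfigEquiv hv).injective.eq_iff,
    Prod.mk.injEq, true_and, splitConfig_insert_insertAt_snd]
  split_ifs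
  · have hcard : Fintype.card ({w // w ∈ insert v J} → Fin d) =
        d * Fintype.card ({w // w ∈ J} → Fin d) := by
      rw [← Fintype.card_congr (insertConfigEquiv hv), Fintype.card_prod, Fintype.card_fin]
    rw [Finset.sum_const, Finset.card_univ, Fintype.card_fin, ← Finset.mul_sum,
      ← Fintype.sum_prod_type', hcard, nsmul_eq_mul, Nat.cast_mul, mul_inv, ← mul_assoc,
      ← mul_assoc, mul_inv_cancel₀ (by exact_mod_cast hd.ne'), one_mul]
    exact congrArg _ (Fintype.sum_equiv (insertConfigEquiv hv) _ _ fun _ => rfl).symm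
  · simp

end Depolarize

section Wasserstein

variable {V : Type*} [Fintype V] [DecidableEq V] {d : ℕ}

def IsW1Decomposition (X : Matrix (V → Fin d) (V → Fin d) ℂ)
    (Y : V → Matrix (V → Fin d) (V → Fin d) ℂ) : Prop :=
  X = ∑ v, Y v ∧ ∀ v, ptraceSite v (Y v) = 0

lemma isW1Decomposition_zero : IsW1Decomposition (0 : Matrix (V → Fin d) (V → Fin d) ℂ) 0 :=
  ⟨by simp, fun v => by simp⟩

lemma IsW1Decomposition.add {X₁ X₂ : Matrix (V → Fin d) (V → Fin d) ℂ}
    {Y₁ Y₂ : V → Matrix (V → Fin d) (V → Fin d) ℂ} (h₁ : IsW1Decomposition X₁ Y₁)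
    (h₂ : IsW1Decomposition X₂ Y₂) : IsW1Decomposition (X₁ + X₂) (Y₁ + Y₂) :=
  ⟨by rw [h₁.1, h₂.1, ← Finset.sum_add_distrib]; rfl,
    fun v => by rw [Pi.add_apply, ptraceSite_add, h₁.2, h₂.2, add_zero]⟩

lemma isW1Decomposition_single {v : V} {M : Matrix (V → Fin d) (V → Fin d) ℂ}
    (hM : ptraceSite v M = 0) : IsW1Decomposition M (Pi.single v M) := by
  refine ⟨by simp, fun w => ?_⟩
  by_cases h : w = v
  · subst h; simpa using hM
  · simp [h]

lemma W1norm_le_of_isW1Decomposition {X : Matrix (V → Fin d) (V → Fin d) ℂ}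
    {Y : V → Matrix (V → Fin d) (V → Fin d) ℂ} (h : IsW1Decomposition X Y) :
    W1norm X ≤ (1 / 2) * ∑ v, traceNorm (Y v) := by
  refine csInf_le ⟨0, ?_⟩ ⟨Y, h.1, h.2, rfl⟩
  rintro _ ⟨Z, -, -, rfl⟩
  exact mul_nonneg (by norm_num) (Finset.sum_nonneg fun v _ => traceNorm_nonneg _)

lemma exists_isW1Decomposition_sub_depolarize (X : Matrix (V → Fin d) (V → Fin d) ℂ)
    (A : Finset V) : ∃ Y, IsW1Decomposition (X - depolarize A X) Y ∧
      ∑ v, traceNorm (Y v) ≤ 2 * A.card * traceNorm X := by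
  induction A using Finset.induction_on with
  | empty => exact ⟨0, by simpa using isW1Decomposition_zero, by simp⟩
  | @insert v J hv ih =>
    obtain ⟨Y, hY, hcost⟩ := ih
    set M := depolarize J X - depolarize (insert v J) X
    have hM : ptraceSite v M = 0 := by
      rw [ptraceSite_sub, ptraceSite_depolarize_insert hv, sub_self]
    have hXM : X - depolarize (insert v J) X = (X - depolarize J X) + M := by
      simp only [M, sub_add_sub_cancel]
    set S : V → Matrix (V → Fin d) (V → Fin d) ℂ := Pi.single v M
    refine ⟨Y + S, hXM ▸ hY.add (isW1Decomposition_single hM), ?_⟩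
    have hMcost : traceNorm M ≤ 2 * traceNorm X := by
      linarith [traceNorm_sub_le (depolarize J X) (depolarize (insert v J) X),
        traceNorm_depolarize_le J X, traceNorm_depolarize_le (insert v J) X]
    have hS : ∑ w, traceNorm (S w) = traceNorm M := by
      rw [Fintype.sum_eq_single v fun w hw => by simp [S, hw]]
      simp [S]
    calc ∑ w, traceNorm ((Y + S) w)
        ≤ ∑ w, (traceNorm (Y w) + traceNorm (S w)) :=
          Finset.sum_le_sum fun w _ => traceNorm_add_le _ _
      _ = ∑ w, traceNorm (Y w) + traceNorm M := by rw [Finset.sum_add_distrib, hS]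
      _ ≤ 2 * (insert v J).card * traceNorm X := by
          rw [Finset.card_insert_of_notMem hv, Nat.cast_add_one]
          linarith

lemma sum_dite_mem_zero {M : Type*} [AddCommMonoid M] (A : Finset V) (g : {w // w ∉ A} → M) :
    ∑ v, (if hv : v ∈ A then 0 else g ⟨v, hv⟩) = ∑ w, g w := by
  rw [← Fintype.sum_subtype_add_sum_subtype (· ∈ A), Finset.sum_eq_zero fun v _ => dif_pos v.2,
    zero_add]
  exact Finset.sum_congr rfl fun v _ => dif_neg v.2

lemma IsW1Decomposition.tensorMaxMixed {A : Finset V}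
    {B : Matrix ({w // w ∉ A} → Fin d) ({w // w ∉ A} → Fin d) ℂ}
    {Z : {w // w ∉ A} → Matrix ({w // w ∉ A} → Fin d) ({w // w ∉ A} → Fin d) ℂ}
    (h : IsW1Decomposition B Z) :
    IsW1Decomposition (tensorMaxMixed A B)
      fun v => if hv : v ∈ A then 0 else tensorMaxMixed A (Z ⟨v, hv⟩) := by
  refine ⟨?_, fun v => ?_⟩
  · rw [h.1, tensorMaxMixed_sum]
    exact (sum_dite_mem_zero A _).symm
  · by_cases hv : v ∈ A
    · simp [hv]
    · simpa [hv] using ptraceSite_tensorMaxMixed_eq_zero hv (h.2 ⟨v, hv⟩)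

lemma exists_isW1Decomposition {X : Matrix (V → Fin d) (V → Fin d) ℂ} (htr : trace X = 0) :
    ∃ Y, IsW1Decomposition X Y := by
  obtain ⟨Y, hY, -⟩ := exists_isW1Decomposition_sub_depolarize X Finset.univ
  exact ⟨Y, by simpa [depolarize_univ_eq_zero htr] using hY⟩

lemma exists_isW1Decomposition_of_ptraceSet {X : Matrix (V → Fin d) (V → Fin d) ℂ}
    {A : Finset V}
    {Z : {w // w ∉ A} → Matrix ({w // w ∉ A} → Fin d) ({w // w ∉ A} → Fin d) ℂ}
    (hZ : IsW1Decomposition (ptraceSet A X) Z) :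
    ∃ Y, IsW1Decomposition X Y ∧
      ∑ v, traceNorm (Y v) ≤ 2 * A.card * traceNorm X + ∑ w, traceNorm (Z w) := by
  obtain ⟨Y, hY, hcost⟩ := exists_isW1Decomposition_sub_depolarize X A
  set L : V → Matrix (V → Fin d) (V → Fin d) ℂ :=
    fun v => if hv : v ∈ A then 0 else tensorMaxMixed A (Z ⟨v, hv⟩)
  refine ⟨Y + L, sub_add_cancel X (depolarize A X) ▸ hY.add hZ.tensorMaxMixed, ?_⟩
  have hL : ∑ v, traceNorm (L v) ≤ ∑ w, traceNorm (Z w) := by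
    calc ∑ v, traceNorm (L v) = ∑ w, traceNorm (tensorMaxMixed A (Z w)) := by
          rw [← sum_dite_mem_zero A]
          exact Finset.sum_congr rfl fun v _ => by by_cases hv : v ∈ A <;> simp [L, hv]
      _ ≤ ∑ w, traceNorm (Z w) := Finset.sum_le_sum fun w _ => traceNorm_tensorMaxMixed_le _
  calc ∑ v, traceNorm ((Y + L) v)
      ≤ ∑ v, (traceNorm (Y v) + traceNorm (L v)) :=
        Finset.sum_le_sum fun v _ => traceNorm_add_le _ _
    _ ≤ _ := by rw [Finset.sum_add_distrib]; linarith

end Wasserstein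

theorem W1norm_le_card_traceNorm_add_general {V : Type*} [Fintype V] [DecidableEq V] {d : ℕ}
    (X : Matrix (V → Fin d) (V → Fin d) ℂ)
    (htr : Matrix.trace X = 0) (A : Finset V) :
    W1norm X ≤ (A.card : ℝ) * traceNorm X + W1norm (ptraceSet A X) := by
  obtain ⟨Z₀, hZ₀⟩ := exists_isW1Decomposition ((trace_ptraceSet (A := A) X).trans htr)
  suffices W1norm X - A.card * traceNorm X ≤ W1norm (ptraceSet A X) by linarith
  refine le_csInf ⟨_, Z₀, hZ₀.1, hZ₀.2, rfl⟩ ?_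
  rintro _ ⟨Z, hsum, hpt, rfl⟩
  obtain ⟨Y, hY, hcost⟩ := exists_isW1Decomposition_of_ptraceSet ⟨hsum, hpt⟩
  linarith [W1norm_le_of_isW1Decomposition hY]

/-- For any traceless self-adjoint `X` on an `n`-qudit system and any subset `A` of the
sites, `‖X‖_{W₁} ≤ |A|·‖X‖₁ + ‖Tr_A X‖_{W₁}`. -/
theorem W1norm_le_card_traceNorm_add {V : Type*} [Fintype V] [DecidableEq V] {d : ℕ}
    (X : Matrix (V → Fin d) (V → Fin d) ℂ)
    (hX : X.IsHermitian) (htr : Matrix.trace X = 0) (A : Finset V) :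
    W1norm X ≤ (A.card : ℝ) * traceNorm X + W1norm (ptraceSet A X) :=
  W1norm_le_card_traceNorm_add_general X htr A
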